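/- Backward exit time bound: let T > 0, g > 0, E_e, B_e ∈ ℝ, and let E, B : ℝ×ℝ³ → ℝ³ be continuously differentiable with sup over [0,T]×Ω̄ of (|E| + |B| + |∂_{t,x}E| + |∂_{t,x}B|) finite. Let c₀ > 0 and assume the interior sign condition g − E_e − E₃(t,x) − (v̂ × B(t,x))₃ ≥ c₀ for all t ∈ [0,T], x ∈ Ω̄, v ∈ ℝ³. Then there exists a constant C > 0, depending only on T, g, |E_e|, |B_e|, c₀ and the above supremum of the fields and their first derivatives, with the following property: if (t,x,v) ∈ (0,T)×Ω×ℝ³, X, V : ℝ → ℝ³ are differentiable with X′(τ) = V(τ)/⟨V(τ)⟩, V′(τ) = 𝔉(τ,X(τ),V(τ)), X(t) = x, V(t) = v, and t_b ∈ (0,t] satisfies X₃(τ) > 0 for all τ ∈ (t−t_b, t) and X₃(t−t_b) = 0, then t_b ≤ (C/c₀) · ( sup_{t−t_b ≤ s ≤ t} ⟨V(s)⟩ ) · V₃(t−t_b)/⟨V(t−t_b)⟩. -/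

import Mathlib

open MeasureTheory Set

noncomputable section

/-- Physical space `ℝ³`, realized as functions `Fin 3 → ℝ`. -/
abbrev V3 : Type := Fin 3 → ℝ

/-- Euclidean inner product on `ℝ³`. -/
def dot3 (a b : V3) : ℝ := a 0 * b 0 + a 1 * b 1 + a 2 * b 2

/-- Euclidean norm on `ℝ³`. -/
def enorm3 (a : V3) : ℝ := Real.sqrt (dot3 a a)

/-- Cross product on `ℝ³`. -/
def cross3 (a b : V3) : V3 :=
  ![a 1 * b 2 - a 2 * b 1, a 2 * b 0 - a 0 * b 2, a 0 * b 1 - a 1 * b 0]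

/-- `⟨v⟩ = √(1 + |v|²)`. -/
def jap (v : V3) : ℝ := Real.sqrt (1 + dot3 v v)

/-- Relativistic velocity `v̂ = v / ⟨v⟩`. -/
def vhat (v : V3) : V3 := (jap v)⁻¹ • v

/-- The open upper half space `Ω = {x ∈ ℝ³ : x₃ > 0}`. -/
def halfSpace : Set V3 := {x : V3 | 0 < x 2}

/-- Embedding of the boundary `∂Ω ≃ ℝ²` into `ℝ³`. -/
def bdryPt (y : ℝ × ℝ) : V3 := ![y.1, y.2, 0]

/-- Projection `(x₁,x₂,x₃) ↦ (x₁,x₂,0)` onto the boundary. -/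
def proj0 (x : V3) : V3 := ![x 0, x 1, 0]

/-- Reflection `x̄ = (x₁,x₂,−x₃)`. -/
def refl3 (x : V3) : V3 := ![x 0, x 1, -(x 2)]

/-- Time derivative `∂ₜ` of a space-time function. -/
def pdt (f : ℝ × V3 → ℝ) : ℝ × V3 → ℝ := fun q => fderiv ℝ f q (1, 0)

/-- Spatial partial derivative `∂_{xᵢ}` of a space-time function. -/
def pdx (i : Fin 3) (f : ℝ × V3 → ℝ) : ℝ × V3 → ℝ := fun q => fderiv ℝ f q (0, Pi.single i 1)

/-- Partial derivative `∂_{xᵢ}` of a function on `ℝ³`. -/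
def sdx (i : Fin 3) (u : V3 → ℝ) : V3 → ℝ := fun x => fderiv ℝ u x (Pi.single i 1)

/-- `i`-th component of a space-time vector field. -/
def comp3 (F : ℝ × V3 → V3) (i : Fin 3) : ℝ × V3 → ℝ := fun q => F q i

/-- Spatial divergence of a space-time vector field. -/
def divX (F : ℝ × V3 → V3) (q : ℝ × V3) : ℝ := ∑ i : Fin 3, pdx i (comp3 F i) q

/-- Spatial curl of a space-time vector field. -/
def curlX (F : ℝ × V3 → V3) (q : ℝ × V3) : V3 :=
  ![pdx 1 (comp3 F 2) q - pdx 2 (comp3 F 1) q,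
    pdx 2 (comp3 F 0) q - pdx 0 (comp3 F 2) q,
    pdx 0 (comp3 F 1) q - pdx 1 (comp3 F 0) q]

/-- Curl of a vector field on `ℝ³`. -/
def curlS (F : V3 → V3) (x : V3) : V3 :=
  ![sdx 1 (fun z => F z 2) x - sdx 2 (fun z => F z 1) x,
    sdx 2 (fun z => F z 0) x - sdx 0 (fun z => F z 2) x,
    sdx 0 (fun z => F z 1) x - sdx 1 (fun z => F z 0) x]

/-- Divergence of a vector field on `ℝ³`. -/
def divS (F : V3 → V3) (x : V3) : ℝ := ∑ i : Fin 3, sdx i (fun z => F z i) x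

/-- Spatial Laplacian of a space-time function. -/
def lapST (f : ℝ × V3 → ℝ) (q : ℝ × V3) : ℝ := ∑ i : Fin 3, pdx i (pdx i f) q

/-- Laplacian of a function on `ℝ³`. -/
def lapS (u : V3 → ℝ) (x : V3) : ℝ := ∑ i : Fin 3, sdx i (sdx i u) x

/-- Open space-time domain `(0,T) × Ω`. -/
def stDom (T : ℝ) : Set (ℝ × V3) := Ioo (0 : ℝ) T ×ˢ halfSpace

/-- Closed space-time domain `[0,T] × Ω̄`. -/
def stDomCl (T : ℝ) : Set (ℝ × V3) := Icc (0 : ℝ) T ×ˢ closure halfSpace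

/-- Lateral boundary domain `(0,T) × ∂Ω`, with `∂Ω ≃ ℝ²`. -/
def bDom (T : ℝ) : Set (ℝ × (ℝ × ℝ)) := Ioo (0 : ℝ) T ×ˢ (univ : Set (ℝ × ℝ))

/-- The third standard basis vector `e₃`. -/
def e3v : V3 := ![0, 0, 1]

/-- The Lorentz force `𝔉(t,x,v) = E + E_e e₃ + v̂ × (B + B_e e₃) − g e₃`. -/
def lorentz (E B : ℝ × V3 → V3) (Ee Be g : ℝ) (t : ℝ) (x v : V3) : V3 :=
  E (t, x) + Ee • e3v + cross3 (vhat v) (B (t, x) + Be • e3v) - g • e3v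

/-- The kinetic weight
`α(t,x,v) = √( x₃² + v̂₃² + 2(g − E_e − E₃(t,x₁,x₂,0) − (v̂ × B(t,x₁,x₂,0))₃) x₃/⟨v⟩ )`. -/
def kinWeight (E B : ℝ × V3 → V3) (Ee g : ℝ) (t : ℝ) (x v : V3) : ℝ :=
  Real.sqrt ((x 2) ^ 2 + (vhat v 2) ^ 2
    + 2 * (g - Ee - E (t, proj0 x) 2 - cross3 (vhat v) (B (t, proj0 x)) 2) * x 2 / jap v)

/-!
Along the characteristic the sign condition gives `V₃' = 𝔉₃ ≤ -c₀`, so `V₃` decreases at least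
linearly from `a = V₃(t - t_b) ≥ 0`, and a bound `K` on the force gives `|d⟨V⟩/dτ| ≤ 3K`, hence
`⟨V(t - t_b)⟩ ≤ (1 + 3KT) ⟨V(τ)⟩`. Integrating `X₃' = V₃ / ⟨V⟩` from the exit time, `X₃` gains at
most `(1 + 3KT) a² / (2 c₀ ⟨V(t - t_b)⟩)` before time `t - t_b + a / c₀` and afterwards loses at
least `c₀ (t_b - a / c₀)² / (2P)`, where `P = sup ⟨V⟩`. Since `X₃(t) > 0 = X₃(t - t_b)`, this
forces `t_b ≤ 2 (1 + 3KT) P a / (c₀ ⟨V(t - t_b)⟩)`.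
-/

lemma dot3_self_nonneg (v : V3) : 0 ≤ dot3 v v := by
  unfold dot3; nlinarith [mul_self_nonneg (v 0), mul_self_nonneg (v 1), mul_self_nonneg (v 2)]

lemma one_le_jap (v : V3) : 1 ≤ jap v :=
  Real.one_le_sqrt.mpr (le_add_of_nonneg_right (dot3_self_nonneg v))

lemma jap_pos (v : V3) : 0 < jap v := one_pos.trans_le (one_le_jap v)

lemma enorm3_nonneg (v : V3) : 0 ≤ enorm3 v := Real.sqrt_nonneg _

lemma sq_apply_le_dot3 (v : V3) (i : Fin 3) : v i ^ 2 ≤ dot3 v v := by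
  fin_cases i <;> simp only [dot3, Fin.zero_eta, Fin.mk_one, Fin.reduceFinMk] <;>
    nlinarith [sq_nonneg (v 0), sq_nonneg (v 1), sq_nonneg (v 2)]

lemma norm_le_enorm3 (v : V3) : ‖v‖ ≤ enorm3 v :=
  (pi_norm_le_iff_of_nonneg (Real.sqrt_nonneg _)).mpr fun i =>
    Real.abs_le_sqrt (sq_apply_le_dot3 v i)

lemma norm_le_jap (v : V3) : ‖v‖ ≤ jap v :=
  (pi_norm_le_iff_of_nonneg (Real.sqrt_nonneg _)).mpr fun i =>
    Real.abs_le_sqrt (by linarith [sq_apply_le_dot3 v i])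

lemma vhat_apply (v : V3) (i : Fin 3) : vhat v i = v i / jap v := by
  simp [vhat, div_eq_inv_mul]

lemma norm_vhat_le_one (v : V3) : ‖vhat v‖ ≤ 1 := by
  rw [vhat, norm_smul, norm_inv, Real.norm_of_nonneg (jap_pos v).le]
  exact inv_mul_le_one_of_le₀ (norm_le_jap v) (jap_pos v).le

lemma norm_e3v : ‖e3v‖ = 1 := by
  refine le_antisymm ((pi_norm_le_iff_of_nonneg zero_le_one).mpr fun i => ?_) ?_
  · fin_cases i <;> simp [e3v]
  · simpa [e3v] using norm_le_pi_norm e3v 2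

lemma norm_cross3_le (a b : V3) : ‖cross3 a b‖ ≤ 2 * ‖a‖ * ‖b‖ := by
  have h : ∀ i j, |a i * b j| ≤ ‖a‖ * ‖b‖ := fun i j => by
    rw [abs_mul]
    exact mul_le_mul (norm_le_pi_norm a i) (norm_le_pi_norm b j) (abs_nonneg _) (norm_nonneg a)
  refine (pi_norm_le_iff_of_nonneg (by positivity)).mpr fun i => ?_
  rw [Real.norm_eq_abs]
  fin_cases i <;> simp only [cross3] <;> simp <;>
    exact (abs_sub _ _).trans (by linarith [h 0 1, h 1 0, h 0 2, h 2 0, h 1 2, h 2 1])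

lemma abs_dot3_le (a b : V3) : |dot3 a b| ≤ 3 * ‖a‖ * ‖b‖ := by
  have h : ∀ i, |a i * b i| ≤ ‖a‖ * ‖b‖ := fun i => by
    rw [abs_mul]
    exact mul_le_mul (norm_le_pi_norm a i) (norm_le_pi_norm b i) (abs_nonneg _) (norm_nonneg a)
  calc |dot3 a b| ≤ |a 0 * b 0| + |a 1 * b 1| + |a 2 * b 2| :=
        (abs_add_le _ _).trans (add_le_add_left (abs_add_le _ _) _)
    _ ≤ 3 * ‖a‖ * ‖b‖ := by linarith [h 0, h 1, h 2]

lemma closure_halfSpace_eq : closure halfSpace = {x : V3 | 0 ≤ x 2} := by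
  have h := (isOpenMap_eval (X := fun _ : Fin 3 => ℝ) 2).preimage_closure_eq_closure_preimage
    (continuous_apply 2) (Ioi 0)
  rw [closure_Ioi] at h
  exact h.symm

lemma lorentz_apply_two (E B : ℝ × V3 → V3) (Ee Be g t : ℝ) (x v : V3) :
    lorentz E B Ee Be g t x v 2 = E (t, x) 2 + Ee + cross3 (vhat v) (B (t, x)) 2 - g := by
  simp [lorentz, cross3, e3v, Matrix.vecHead, Matrix.vecTail]

lemma lorentz_apply_two_le_neg {E B : ℝ × V3 → V3} {Ee Be g t c : ℝ} {x v : V3}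
    (h : c ≤ g - Ee - E (t, x) 2 - cross3 (vhat v) (B (t, x)) 2) :
    lorentz E B Ee Be g t x v 2 ≤ -c := by
  rw [lorentz_apply_two]; linarith

lemma norm_lorentz_le {E B : ℝ × V3 → V3} {Ee Be g t m : ℝ} {x : V3}
    (hEB : enorm3 (E (t, x)) + enorm3 (B (t, x)) ≤ m) (v : V3) :
    ‖lorentz E B Ee Be g t x v‖ ≤ m + |Ee| + 2 * (m + |Be|) + |g| := by
  have hE : enorm3 (E (t, x)) ≤ m := by linarith [enorm3_nonneg (B (t, x))]
  have hB : enorm3 (B (t, x)) ≤ m := by linarith [enorm3_nonneg (E (t, x))]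
  have hBe : ‖B (t, x) + Be • e3v‖ ≤ m + |Be| := by
    grw [norm_add_le, norm_smul, norm_e3v, norm_le_enorm3, hB, Real.norm_eq_abs, mul_one]
  have hcross : ‖cross3 (vhat v) (B (t, x) + Be • e3v)‖ ≤ 2 * (m + |Be|) := by
    grw [norm_cross3_le, norm_vhat_le_one, hBe, mul_one]
  unfold lorentz
  grw [norm_sub_le, norm_add_le, norm_add_le, hcross, norm_smul, norm_smul, norm_e3v,
    norm_le_enorm3, hE, Real.norm_eq_abs, Real.norm_eq_abs, mul_one, mul_one]

theorem HasDerivAt.jap {V : ℝ → V3} {V' : V3} {τ : ℝ} (h : HasDerivAt V V' τ) :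
    HasDerivAt (fun s => jap (V s)) (dot3 (V τ) V' / jap (V τ)) τ := by
  have hc : ∀ i, HasDerivAt (fun s => V s i) (V' i) τ := fun i => hasDerivAt_pi.mp h i
  have hdot : HasDerivAt (fun s => 1 + dot3 (V s) (V s)) (2 * dot3 (V τ) V') τ := by
    refine ((((hc 0).fun_mul (hc 0)).fun_add ((hc 1).fun_mul (hc 1))).fun_add
      ((hc 2).fun_mul (hc 2))).const_add 1 |>.congr_deriv ?_
    simp only [dot3]; ring
  refine (hdot.sqrt (by linarith [dot3_self_nonneg (V τ)])).congr_deriv ?_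
  have hj : √(1 + dot3 (V τ) (V τ)) = _root_.jap (V τ) := rfl
  rw [hj]; field_simp

lemma sub_le_sub_of_hasDerivAt_le {f g f' g' : ℝ → ℝ} {a b : ℝ} (hab : a ≤ b)
    (hf : ∀ x ∈ Icc a b, HasDerivAt f (f' x) x) (hg : ∀ x ∈ Icc a b, HasDerivAt g (g' x) x)
    (hle : ∀ x ∈ Icc a b, f' x ≤ g' x) : f b - f a ≤ g b - g a := by
  have hmono : MonotoneOn (fun x => g x - f x) (Icc a b) :=
    monotoneOn_of_hasDerivWithinAt_nonneg (convex_Icc a b)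
      (fun x hx => ((hg x hx).sub (hf x hx)).continuousAt.continuousWithinAt)
      (fun x hx => ((hg x (interior_subset hx)).sub (hf x (interior_subset hx))).hasDerivWithinAt)
      (fun x hx => sub_nonneg.mpr (hle x (interior_subset hx)))
  have := hmono (left_mem_Icc.mpr hab) (right_mem_Icc.mpr hab) hab
  linarith

lemma sub_le_mul_sub_of_hasDerivAt_le {f f' : ℝ → ℝ} {a b C : ℝ} (hab : a ≤ b)
    (hf : ∀ x ∈ Icc a b, HasDerivAt f (f' x) x) (hle : ∀ x ∈ Icc a b, f' x ≤ C) :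
    f b - f a ≤ C * (b - a) := by
  have h := sub_le_sub_of_hasDerivAt_le (g := fun x => C * x) hab hf
    (fun x _ => (hasDerivAt_id' x).const_mul C)
    fun x hx => (hle x hx).trans_eq (mul_one C).symm
  linarith

lemma IsMinOn.hasDerivAt_nonneg_of_left {f : ℝ → ℝ} {f' a b : ℝ} (hab : a < b)
    (hmin : IsMinOn f (Icc a b) a) (hf : HasDerivAt f f' a) : 0 ≤ f' := by
  have hcone : b - a ∈ posTangentConeAt (Icc a b) a :=
    sub_mem_posTangentConeAt_of_segment_subset (segment_eq_Icc hab.le ▸ Subset.rfl)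
  have h := hmin.localize.hasFDerivWithinAt_nonneg hf.hasFDerivAt.hasFDerivWithinAt hcone
  rw [ContinuousLinearMap.toSpanSingleton_apply, smul_eq_mul] at h
  exact nonneg_of_mul_nonneg_right h (sub_pos.mpr hab)

lemma jap_sub_jap_le {V F : ℝ → V3} {a b K τ : ℝ}
    (hV : ∀ s ∈ Icc a b, HasDerivAt V (F s) s) (hF : ∀ s ∈ Icc a b, ‖F s‖ ≤ K) (hτ : τ ∈ Icc a b) :
    jap (V a) - jap (V τ) ≤ 3 * K * (τ - a) := by
  have hsub : Icc a τ ⊆ Icc a b := Icc_subset_Icc_right hτ.2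
  have h := sub_le_mul_sub_of_hasDerivAt_le (f := fun s => -jap (V s)) (C := 3 * K) hτ.1
    (fun s hs => (hV s (hsub hs)).jap.neg) fun s hs => by
      have hdot : 3 * ‖V s‖ * ‖F s‖ ≤ 3 * jap (V s) * K := by
        gcongr
        exacts [mul_nonneg zero_le_three (jap_pos _).le, norm_le_jap _, hF s (hsub hs)]
      rw [neg_le, ← neg_mul, le_div_iff₀ (jap_pos _)]
      linarith [neg_abs_le (dot3 (V s) (F s)), abs_dot3_le (V s) (F s)]
  linarith

lemma le_two_mul_of_sq_sub_lt {τ s R : ℝ} (hs : 0 ≤ s) (hR : 1 ≤ R)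
    (h : (τ - s) ^ 2 < R * s ^ 2) : τ ≤ 2 * R * s := by
  by_contra! hτ
  have hRs : R * s < τ - s := by nlinarith
  nlinarith [mul_nonneg (mul_nonneg hs hs) (sub_nonneg.mpr hR), mul_nonneg (sub_nonneg.mpr hR) hs]

theorem exit_time_sq_lt {x u w : ℝ → ℝ} {τ0 t c γ k P : ℝ} (hc : 0 < c) (hγ : 0 < γ)
    (hP : 0 < P) (hu0 : 0 ≤ u τ0) (ht : τ0 + u τ0 / c ≤ t)
    (hx : ∀ τ ∈ Icc τ0 t, HasDerivAt x (u τ / w τ) τ) (hxt : x τ0 < x t)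
    (hu : ∀ τ ∈ Icc τ0 t, u τ ≤ u τ0 - c * (τ - τ0))
    (hw : ∀ τ ∈ Icc τ0 t, 0 < w τ ∧ w τ ≤ P ∧ γ ≤ k * w τ) :
    (t - τ0 - u τ0 / c) ^ 2 < k * P / γ * (u τ0 / c) ^ 2 := by
  set a := u τ0
  set s := a / c
  set σ := τ0 + s
  have has : a = c * s := (mul_div_cancel₀ a hc.ne').symm
  have hτσ : τ0 ≤ σ := le_add_of_nonneg_right (div_nonneg hu0 hc.le)
  have hσ : Icc τ0 σ ⊆ Icc τ0 t := Icc_subset_Icc_right ht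
  have hσ' : Icc σ t ⊆ Icc τ0 t := Icc_subset_Icc_left hτσ
  -- `Λ` is a primitive of the linear bound `a - c (τ - τ0)` on `u`, which changes sign at `σ`
  set Λ : ℝ → ℝ := fun τ => a * (τ - τ0) - c * (τ - τ0) ^ 2 / 2
  have hΛ : ∀ τ, HasDerivAt Λ (a - c * (τ - τ0)) τ := fun τ => by
    have h := (hasDerivAt_id τ).sub_const τ0
    exact ((h.const_mul a).sub ((h.pow 2).const_mul c |>.div_const 2)).congr_deriv (by simp; ring)
  have hrise : x σ - x τ0 ≤ k / γ * Λ σ - k / γ * Λ τ0 :=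
    sub_le_sub_of_hasDerivAt_le hτσ (fun τ hτ => hx τ (hσ hτ))
      (fun τ _ => (hΛ τ).const_mul (k / γ)) fun τ hτ => by
        obtain ⟨hw0, -, hγw⟩ := hw τ (hσ hτ)
        have hL : 0 ≤ a - c * (τ - τ0) := by nlinarith [hτ.2]
        calc u τ / w τ ≤ (a - c * (τ - τ0)) / w τ := by gcongr; exact hu τ (hσ hτ)
          _ ≤ k / γ * (a - c * (τ - τ0)) := by
              rw [div_le_iff₀ hw0, mul_right_comm, div_mul_eq_mul_div]
              exact le_mul_of_one_le_left hL ((one_le_div hγ).mpr hγw)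
  have hfall : x t - x σ ≤ Λ t / P - Λ σ / P :=
    sub_le_sub_of_hasDerivAt_le ht (fun τ hτ => hx τ (hσ' hτ))
      (fun τ _ => (hΛ τ).div_const P) fun τ hτ => by
        obtain ⟨hw0, hwP, -⟩ := hw τ (hσ' hτ)
        have hL : a - c * (τ - τ0) ≤ 0 := by nlinarith [hτ.1]
        calc u τ / w τ ≤ (a - c * (τ - τ0)) / w τ := by gcongr; exact hu τ (hσ' hτ)
          _ ≤ (a - c * (τ - τ0)) / P := by
              rw [div_le_div_iff₀ hw0 hP]
              exact mul_le_mul_of_nonpos_left hwP hL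
  have hΛσ : k / γ * Λ σ - k / γ * Λ τ0 = c * (k / γ * s ^ 2) / 2 := by
    simp only [Λ, σ, has]; ring
  have hΛt : Λ t / P - Λ σ / P = -(c * ((t - τ0 - s) ^ 2 / P)) / 2 := by
    simp only [Λ, σ, has]; ring
  have key : (t - τ0 - s) ^ 2 / P < k / γ * s ^ 2 :=
    lt_of_mul_lt_mul_left (by linarith) hc.le
  rw [div_lt_iff₀ hP] at key
  linarith [show k / γ * s ^ 2 * P = k * P / γ * s ^ 2 by ring]

theorem exit_time_le {x u w : ℝ → ℝ} {τ0 t c D : ℝ} (hτ : τ0 ≤ t) (hc : 0 < c)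
    (hD : 0 ≤ D) (hx : ∀ τ ∈ Icc τ0 t, HasDerivAt x (u τ / w τ) τ) (hxt : x τ0 < x t)
    (hu0 : 0 ≤ u τ0) (hu : ∀ τ ∈ Icc τ0 t, u τ ≤ u τ0 - c * (τ - τ0))
    (hwc : ContinuousOn w (Icc τ0 t)) (hw1 : ∀ τ ∈ Icc τ0 t, 1 ≤ w τ)
    (hw : ∀ τ ∈ Icc τ0 t, w τ0 - w τ ≤ D) :
    t - τ0 ≤ 2 * (1 + D) / c * sSup (w '' Icc τ0 t) * (u τ0 / w τ0) := by
  set P := sSup (w '' Icc τ0 t)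
  have hτ0 : τ0 ∈ Icc τ0 t := left_mem_Icc.mpr hτ
  have hP : ∀ τ ∈ Icc τ0 t, w τ ≤ P := fun τ hτ =>
    le_csSup (isCompact_Icc.bddAbove_image hwc) (mem_image_of_mem w hτ)
  -- `w τ0 ≤ w τ + D ≤ (1 + D) w τ` because `w τ ≥ 1`
  have hγk : ∀ τ ∈ Icc τ0 t, w τ0 ≤ (1 + D) * w τ := fun τ hτ => by
    nlinarith [hw τ hτ, hw1 τ hτ]
  have hγ : 0 < w τ0 := one_pos.trans_le (hw1 τ0 hτ0)
  have hR : 1 ≤ (1 + D) * P / w τ0 := by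
    rw [le_div_iff₀ hγ, one_mul]
    exact (hγk τ0 hτ0).trans (mul_le_mul_of_nonneg_left (hP τ0 hτ0) (by positivity))
  have hs : 0 ≤ u τ0 / c := div_nonneg hu0 hc.le
  rw [show 2 * (1 + D) / c * P * (u τ0 / w τ0) = 2 * ((1 + D) * P / w τ0) * (u τ0 / c) by ring]
  rcases le_or_gt (t - τ0) (u τ0 / c) with hts | hts
  · nlinarith
  refine le_two_mul_of_sq_sub_lt hs hR ?_
  exact exit_time_sq_lt hc hγ (hγ.trans_le (hP τ0 hτ0)) hu0 (by linarith) hx hxt hu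
    fun τ hτ => ⟨one_pos.trans_le (hw1 τ hτ), hP τ hτ, hγk τ hτ⟩

theorem backward_exit_time_bound_general
    (T g Ee Be c0 M : ℝ) (hT : 0 < T) (hc0 : 0 < c0) :
    ∃ C : ℝ, 0 < C ∧
      ∀ E B : ℝ × V3 → V3,
        ContDiff ℝ 1 E → ContDiff ℝ 1 B →
        (∀ q ∈ stDomCl T,
          enorm3 (E q) + enorm3 (B q) + ‖fderiv ℝ E q‖ + ‖fderiv ℝ B q‖ ≤ M) →
        (∀ t ∈ Icc (0 : ℝ) T, ∀ x ∈ closure halfSpace, ∀ v : V3,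
          c0 ≤ g - Ee - E (t, x) 2 - cross3 (vhat v) (B (t, x)) 2) →
        ∀ (t : ℝ) (x v : V3) (X V : ℝ → V3) (tb : ℝ),
          t ∈ Ioo (0 : ℝ) T → x ∈ halfSpace →
          (∀ τ : ℝ, HasDerivAt X (vhat (V τ)) τ) →
          (∀ τ : ℝ, HasDerivAt V (lorentz E B Ee Be g τ (X τ) (V τ)) τ) →
          X t = x → V t = v → 0 < tb → tb ≤ t →
          (∀ τ ∈ Ioo (t - tb) t, 0 < X τ 2) → X (t - tb) 2 = 0 →
          tb ≤ C / c0 * sSup ((fun s => jap (V s)) '' Icc (t - tb) t)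
              * (V (t - tb) 2 / jap (V (t - tb))) := by
  set K := |M| + |Ee| + 2 * (|M| + |Be|) + |g|
  refine ⟨2 * (1 + 3 * K * T), by positivity, ?_⟩
  intro E B _ _ hbound hsign t x v X V tb ht hx hX hV hXt _ htb htbt hpos hexit
  set τ0 := t - tb with hτ0
  have hX2 : ∀ τ ∈ Icc τ0 t, 0 ≤ X τ 2 := fun τ hτ => by
    rcases eq_endpoints_or_mem_Ioo_of_mem_Icc hτ with rfl | rfl | h
    exacts [hexit.ge, hXt ▸ hx.le, (hpos τ h).le]
  have hdom : ∀ τ ∈ Icc τ0 t, τ ∈ Icc 0 T ∧ X τ ∈ closure halfSpace := fun τ hτ =>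
    ⟨⟨by linarith [hτ.1], by linarith [hτ.2, ht.2]⟩, closure_halfSpace_eq ▸ hX2 τ hτ⟩
  have hforce : ∀ τ ∈ Icc τ0 t, ‖lorentz E B Ee Be g τ (X τ) (V τ)‖ ≤ K := by
    intro τ hτ
    have := hbound (τ, X τ) (hdom τ hτ)
    have := norm_nonneg (fderiv ℝ E (τ, X τ))
    have := norm_nonneg (fderiv ℝ B (τ, X τ))
    exact norm_lorentz_le (by linarith [le_abs_self M]) (V τ)
  have hdecel : ∀ τ ∈ Icc τ0 t, V τ 2 ≤ V τ0 2 - c0 * (τ - τ0) := fun τ hτ => by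
    have := sub_le_mul_sub_of_hasDerivAt_le hτ.1 (fun s _ => hasDerivAt_pi.mp (hV s) 2)
      fun s hs => by
        obtain ⟨hsT, hXs⟩ := hdom s ⟨hs.1, hs.2.trans hτ.2⟩
        exact lorentz_apply_two_le_neg (hsign s hsT (X s) hXs (V s))
    linarith
  have hV0 : 0 ≤ V τ0 2 := by
    have hmin : IsMinOn (fun s => X s 2) (Icc τ0 t) τ0 := fun τ hτ => by
      simpa [hexit] using hX2 τ hτ
    have h := hmin.hasDerivAt_nonneg_of_left (by linarith) (hasDerivAt_pi.mp (hX τ0) 2)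
    rwa [vhat_apply, le_div_iff₀ (jap_pos _), zero_mul] at h
  have h := exit_time_le (x := fun s => X s 2) (u := fun s => V s 2) (w := fun s => jap (V s))
    (D := 3 * K * T) (by linarith) hc0 (by positivity)
    (fun τ _ => vhat_apply (V τ) 2 ▸ hasDerivAt_pi.mp (hX τ) 2)
    (by simp only [hexit, hXt]; exact hx)
    hV0 hdecel (fun τ _ => (hV τ).jap.continuousAt.continuousWithinAt)
    (fun τ _ => one_le_jap (V τ)) fun τ hτ => by
      refine (jap_sub_jap_le (fun s _ => hV s) hforce hτ).trans ?_
      gcongr; linarith [(hdom τ hτ).1.2]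
  rwa [sub_sub_cancel] at h

/-- backward exit time bound; the constant `C` depends only on `T`, `g`,
`|E_e|`, `|B_e|`, `c₀` and the bound `M` on the fields and their first derivatives. -/
theorem backward_exit_time_bound
    (T g Ee Be c0 M : ℝ) (hT : 0 < T) (hg : 0 < g) (hc0 : 0 < c0) :
    ∃ C : ℝ, 0 < C ∧
      ∀ E B : ℝ × V3 → V3,
        ContDiff ℝ 1 E → ContDiff ℝ 1 B →
        (∀ q ∈ stDomCl T,
          enorm3 (E q) + enorm3 (B q) + ‖fderiv ℝ E q‖ + ‖fderiv ℝ B q‖ ≤ M) →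
        (∀ t ∈ Icc (0 : ℝ) T, ∀ x ∈ closure halfSpace, ∀ v : V3,
          c0 ≤ g - Ee - E (t, x) 2 - cross3 (vhat v) (B (t, x)) 2) →
        ∀ (t : ℝ) (x v : V3) (X V : ℝ → V3) (tb : ℝ),
          t ∈ Ioo (0 : ℝ) T → x ∈ halfSpace →
          (∀ τ : ℝ, HasDerivAt X (vhat (V τ)) τ) →
          (∀ τ : ℝ, HasDerivAt V (lorentz E B Ee Be g τ (X τ) (V τ)) τ) →
          X t = x → V t = v → 0 < tb → tb ≤ t →
          (∀ τ ∈ Ioo (t - tb) t, 0 < X τ 2) → X (t - tb) 2 = 0 →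
          tb ≤ C / c0 * sSup ((fun s => jap (V s)) '' Icc (t - tb) t)
              * (V (t - tb) 2 / jap (V (t - tb))) :=
  backward_exit_time_bound_general T g Ee Be c0 M hT hc0
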